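/- Let η: [0,∞) → ℝ be continuous with η(0) = 0, continuously differentiable on (0,∞), and such that r·η'(r) → 0 as r → 0+. Let φ: ℝ^d → ℝ^d be twice continuously differentiable with compact support, and let v: ℝ^d → [0,∞) be measurable and bounded with x ↦ η(v(x)) Lebesgue-integrable. Then there is ε > 0 such that the map τ ↦ ∫_{ℝ^d} η( v(x) · (det(I + τ·Dφ(x + τφ(x))))^{−1} ) · det(I + τ·Dφ(x)) dx is well defined on (−ε,ε) and differentiable at τ = 0 with derivative ∫_{ℝ^d} ( η(v(x)) − η'(v(x))·v(x) ) · div φ(x) dx, where η'(v(x))·v(x) is set to 0 on {v = 0}. -/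

import Mathlib

/-!
Write `g τ x = det (1 + τ • Dφ (x + τ • φ x))` and `h τ x = det (1 + τ • Dφ x)`. Both are `C¹`,
equal `1` at `τ = 0` and off the compact support `K` of `φ`, and their `τ`-derivatives at `0` are
both `div φ`, since the derivative of `det` at the identity is the trace. For small `τ` the function
`g` is positive, so the `τ`-derivative `η (v/g) ∂h - (v/g) η' (v/g) ∂g h / g` of the integrand is a
continuous function of `(v x, τ, x)` on a compact set (`r η' r` extends continuously by `0` at
`r = 0`) that vanishes for `x ∉ K`. It is thus dominated by a multiple of the indicator of `K`,
and differentiation under the integral sign gives the formula.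
-/

open MeasureTheory Real Set

/-- The Jacobian matrix of a map `φ : ℝ^d → ℝ^d` at a point `x`:
`(Dφ(x))_{ij} = ∂_j φ_i (x)`. -/
noncomputable def jacobianMatrix {d : ℕ} (φ : EuclideanSpace ℝ (Fin d) → EuclideanSpace ℝ (Fin d))
    (x : EuclideanSpace ℝ (Fin d)) : Matrix (Fin d) (Fin d) ℝ :=
  Matrix.of fun i j => fderiv ℝ φ x (EuclideanSpace.single j 1) i

open Filter Topology

theorem hasDerivAt_comp_prodMk_fderiv {E F : Type*} [NormedAddCommGroup E] [NormedSpace ℝ E]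
    [NormedAddCommGroup F] [NormedSpace ℝ F] {g : ℝ × E → F} {t : ℝ} {x : E}
    (hg : DifferentiableAt ℝ g (t, x)) :
    HasDerivAt (fun s => g (s, x)) (fderiv ℝ g (t, x) (1, 0)) t :=
  hg.hasFDerivAt.comp_hasDerivAt (f := fun s => (s, x)) t
    ((hasDerivAt_id t).prodMk (hasDerivAt_const t x))

theorem contDiff_det {n : Type*} [Fintype n] [DecidableEq n] {E : Type*} [NormedAddCommGroup E]
    [NormedSpace ℝ E] {k : WithTop ℕ∞} {A : E → Matrix n n ℝ}
    (hA : ∀ i j, ContDiff ℝ k fun x => A x i j) : ContDiff ℝ k fun x => (A x).det := by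
  simp only [Matrix.det_apply']
  fun_prop

open Polynomial in
theorem hasDerivAt_det_one_add_smul {n : Type*} [Fintype n] [DecidableEq n]
    (M : Matrix n n ℝ) : HasDerivAt (fun s : ℝ => (1 + s • M).det) M.trace 0 := by
  have h := (Matrix.det (1 + (X : ℝ[X]) • M.map C)).hasDerivAt 0
  rw [Matrix.derivative_det_one_add_X_smul] at h
  have e : (fun s : ℝ => (1 + s • M).det) =
      fun s => eval s (Matrix.det (1 + (X : ℝ[X]) • M.map C)) := by
    funext s
    rw [eval_det]
    congr 1
    ext i j
    simp [Matrix.one_apply, mul_comm]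
  rwa [e]

theorem hasDerivAt_det_one_add_smul_apply {n : Type*} [Fintype n] [DecidableEq n]
    {B : ℝ → Matrix n n ℝ} (hB : ∀ i j, DifferentiableAt ℝ (fun t => B t i j) 0) :
    HasDerivAt (fun t => (1 + t • B t).det) (B 0).trace 0 := by
  set D : ℝ × ℝ → ℝ := fun p => (1 + p.1 • B p.2).det
  have hD : DifferentiableAt ℝ D (0, 0) := by
    have hB' : ∀ i j, DifferentiableAt ℝ (fun p : ℝ × ℝ => B p.2 i j) (0, 0) := fun i j =>
      DifferentiableAt.comp (g := fun t => B t i j) ((0 : ℝ), (0 : ℝ)) (hB i j) differentiableAt_snd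
    simp only [D, Matrix.det_apply', Matrix.add_apply, Matrix.smul_apply, smul_eq_mul]
    fun_prop
  have hL₁ : fderiv ℝ D (0, 0) (1, 0) = (B 0).trace :=
    (hasDerivAt_comp_prodMk_fderiv hD).unique (hasDerivAt_det_one_add_smul (B 0))
  have hL₂ : fderiv ℝ D (0, 0) (0, 1) = 0 :=
    (hD.hasFDerivAt.comp_hasDerivAt (f := fun u => (0, u)) (0 : ℝ)
      ((hasDerivAt_const (0 : ℝ) (0 : ℝ)).prodMk (hasDerivAt_id (0 : ℝ)))).unique
      (by simpa [Function.comp_def, D] using hasDerivAt_const (0 : ℝ) (1 : ℝ))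
  have h := hD.hasFDerivAt.comp_hasDerivAt (f := fun t => (t, t)) (0 : ℝ)
    ((hasDerivAt_id (0 : ℝ)).prodMk (hasDerivAt_id (0 : ℝ)))
  rwa [show ((1 : ℝ), (1 : ℝ)) = (1, 0) + (0, 1) by simp, map_add, hL₁, hL₂, add_zero] at h

theorem continuousOn_mul_Ici_of_tendsto {f : ℝ → ℝ} (hf : ContinuousOn f (Ioi 0))
    (hf_lim : Tendsto (fun r => r * f r) (𝓝[>] 0) (𝓝 0)) :
    ContinuousOn (fun r => r * f r) (Ici 0) := by
  intro r hr
  rcases (mem_Ici.mp hr).eq_or_lt with rfl | hr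
  · rw [← Ioi_insert, continuousWithinAt_insert_self]
    simpa [ContinuousWithinAt] using hf_lim
  · exact (continuousAt_id.mul (hf.continuousAt (Ioi_mem_nhds hr))).continuousWithinAt

theorem measurable_comp_of_continuousOn_Ici {X : Type*} [MeasurableSpace X] {f : ℝ → ℝ}
    (hf : ContinuousOn f (Ici 0)) {v : X → ℝ} (hv : Measurable v) (hv_nonneg : ∀ x, 0 ≤ v x) :
    Measurable fun x => f (v x) := by
  have hf' : Continuous fun r => f (max r 0) :=
    hf.comp_continuous (continuous_id.max continuous_const) fun r => le_max_right r 0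
  simpa [Function.comp_def, max_eq_left (hv_nonneg _)] using hf'.measurable.comp hv

theorem hasDerivAt_comp_mul_inv_mul {η η' : ℝ → ℝ} (hη0 : η 0 = 0)
    (hη_deriv : ∀ r, 0 < r → HasDerivAt η (η' r) r) {a b : ℝ → ℝ} {a' b' t r : ℝ}
    (ha : HasDerivAt a a' t) (hb : HasDerivAt b b' t) (hat : 0 < a t) (hr : 0 ≤ r) :
    HasDerivAt (fun s => η (r * (a s)⁻¹) * b s)
      (η (r * (a t)⁻¹) * b' - r * (a t)⁻¹ * η' (r * (a t)⁻¹) * a' * (a t)⁻¹ * b t) t := by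
  rcases hr.eq_or_lt with rfl | hr
  · simpa [hη0] using hasDerivAt_const t (0 : ℝ)
  · have h := ((hη_deriv _ (mul_pos hr (inv_pos.2 hat))).comp t
      ((ha.inv hat.ne').const_mul r)).mul hb
    refine h.congr_deriv ?_
    simp only [Function.comp_apply, Pi.inv_apply]
    field_simp
    ring

theorem eventually_forall_mem_of_eq_off_compact {X E Y : Type*} [TopologicalSpace X]
    [TopologicalSpace E] [TopologicalSpace Y] {f : X × E → Y} (hf : Continuous f) {x₀ : X} {c : Y}
    (hf₀ : ∀ y, f (x₀, y) = c) {K : Set E} (hK : IsCompact K) (hfK : ∀ x, ∀ y ∉ K, f (x, y) = c)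
    {U : Set Y} (hU : U ∈ 𝓝 c) : ∀ᶠ x in 𝓝 x₀, ∀ y, f (x, y) ∈ U := by
  have hK' : ∀ᶠ x in 𝓝 x₀, ∀ y ∈ K, f (x, y) ∈ U :=
    hK.eventually_forall_of_forall_eventually fun y _ => hf.continuousAt (by rwa [hf₀])
  filter_upwards [hK'] with x hx y
  by_cases hy : y ∈ K
  · exact hx y hy
  · exact hfK x y hy ▸ mem_of_mem_nhds hU

section Integral

variable {E : Type*} [TopologicalSpace E] [T2Space E] [MeasurableSpace E] [OpensMeasurableSpace E]
  {μ : Measure E} [IsFiniteMeasureOnCompacts μ]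

theorem exists_integrable_bound_of_continuousOn {X : Type*} [TopologicalSpace X] {R : Set X}
    (hR : IsCompact R) {K : Set E} (hK : IsCompact K) {Φ : X × E → ℝ}
    (hΦ : ContinuousOn Φ (R ×ˢ K)) (hΦK : ∀ p ∈ R, ∀ x ∉ K, Φ (p, x) = 0) :
    ∃ bound : E → ℝ, Integrable bound μ ∧ ∀ p ∈ R, ∀ x, ‖Φ (p, x)‖ ≤ bound x := by
  obtain ⟨C, hC⟩ := (hR.prod hK).exists_bound_of_continuousOn hΦ
  refine ⟨K.indicator fun _ => C,
    (integrableOn_const hK.measure_lt_top.ne).integrable_indicator hK.measurableSet,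
    fun p hp x => ?_⟩
  by_cases hx : x ∈ K
  · simpa [hx] using hC (p, x) ⟨hp, hx⟩
  · simp [hx, hΦK p hp x hx]

theorem integrable_comp_mul_inv_mul {η : ℝ → ℝ} (hη : ContinuousOn η (Ici 0)) {a b : E → ℝ}
    (ha : Continuous a) (hb : Continuous b) (ha_pos : ∀ x, 0 < a x) {K : Set E}
    (hK : IsCompact K) (haK : ∀ x ∉ K, a x = 1) (hbK : ∀ x ∉ K, b x = 1) {v : E → ℝ}
    (hv : Measurable v) (hv_nonneg : ∀ x, 0 ≤ v x) (hv_bdd : ∃ M, ∀ x, v x ≤ M)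
    (hηv : Integrable (fun x => η (v x)) μ) :
    Integrable (fun x => η (v x * (a x)⁻¹) * b x) μ := by
  obtain ⟨M, hM⟩ := hv_bdd
  set Ψ : ℝ × E → ℝ := fun p => η (p.1 * (a p.2)⁻¹) * b p.2 - η p.1
  have hw : Continuous fun p : ℝ × E => p.1 * (a p.2)⁻¹ :=
    continuous_fst.mul ((ha.comp continuous_snd).inv₀ fun p => (ha_pos p.2).ne')
  have hΨ : ContinuousOn Ψ (Icc 0 M ×ˢ K) :=
    ((hη.comp hw.continuousOn fun p hp => mul_nonneg hp.1.1 (inv_pos.2 (ha_pos _)).le).mul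
      (hb.comp continuous_snd).continuousOn).sub (hη.comp continuousOn_fst fun p hp => hp.1.1)
  obtain ⟨bound, hbound, hΨb⟩ := exists_integrable_bound_of_continuousOn (μ := μ) isCompact_Icc hK
    hΨ fun r _ x hx => by simp [Ψ, haK x hx, hbK x hx]
  have hΨ_meas : Measurable fun x => Ψ (v x, x) :=
    ((measurable_comp_of_continuousOn_Ici hη (hv.mul ha.measurable.inv)
      fun x => mul_nonneg (hv_nonneg x) (inv_pos.2 (ha_pos x)).le).mul hb.measurable).sub
      (measurable_comp_of_continuousOn_Ici hη hv hv_nonneg)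
  refine (hηv.add (hbound.mono' hΨ_meas.aestronglyMeasurable
    (ae_of_all _ fun x => hΨb _ ⟨hv_nonneg x, hM x⟩ x))).congr (ae_of_all _ fun x => ?_)
  simp only [Pi.add_apply, Ψ]
  ring

theorem exists_integrable_bound_deriv_comp_mul_inv_mul {η η' : ℝ → ℝ}
    (hη_cont : ContinuousOn η (Ici 0)) (hη'_cont : ContinuousOn η' (Ioi 0))
    (hη'_lim : Tendsto (fun r => r * η' r) (𝓝[>] 0) (𝓝 0)) {g g' h h' : ℝ × E → ℝ}
    (hg : Continuous g) (hg' : Continuous g') (hh : Continuous h) (hh' : Continuous h')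
    {K : Set E} (hK : IsCompact K) (hg'K : ∀ t, ∀ x ∉ K, g' (t, x) = 0)
    (hh'K : ∀ t, ∀ x ∉ K, h' (t, x) = 0) {δ : ℝ}
    (hg_pos : ∀ t ∈ Metric.closedBall (0 : ℝ) δ, ∀ x, 0 < g (t, x)) {v : E → ℝ}
    (hv_nonneg : ∀ x, 0 ≤ v x) (hv_bdd : ∃ M, ∀ x, v x ≤ M) :
    ∃ bound : E → ℝ, Integrable bound μ ∧ ∀ t ∈ Metric.closedBall (0 : ℝ) δ, ∀ x,
      ‖η (v x * (g (t, x))⁻¹) * h' (t, x) - v x * (g (t, x))⁻¹ * η' (v x * (g (t, x))⁻¹) *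
        g' (t, x) * (g (t, x))⁻¹ * h (t, x)‖ ≤ bound x := by
  obtain ⟨M, hM⟩ := hv_bdd
  set R := Icc 0 M ×ˢ Metric.closedBall (0 : ℝ) δ
  set w : (ℝ × ℝ) × E → ℝ := fun p => p.1.1 * (g (p.1.2, p.2))⁻¹
  have hslice : ∀ {f : ℝ × E → ℝ}, Continuous f →
      Continuous fun p : (ℝ × ℝ) × E => f (p.1.2, p.2) :=
    fun hf => hf.comp (continuous_fst.snd.prodMk continuous_snd)
  have hginv : ContinuousOn (fun p : (ℝ × ℝ) × E => (g (p.1.2, p.2))⁻¹) (R ×ˢ K) :=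
    (hslice hg).continuousOn.inv₀ fun p hp => (hg_pos _ hp.1.2 _).ne'
  have hw : ContinuousOn w (R ×ˢ K) := continuous_fst.fst.continuousOn.mul hginv
  have hw_maps : MapsTo w (R ×ˢ K) (Ici 0) := fun p hp =>
    mul_nonneg hp.1.1.1 (inv_pos.2 (hg_pos _ hp.1.2 _)).le
  have hΦ : ContinuousOn (fun p => η (w p) * h' (p.1.2, p.2) -
      w p * η' (w p) * g' (p.1.2, p.2) * (g (p.1.2, p.2))⁻¹ * h (p.1.2, p.2)) (R ×ˢ K) :=
    ((hη_cont.comp hw hw_maps).mul (hslice hh').continuousOn).sub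
      (((((continuousOn_mul_Ici_of_tendsto hη'_cont hη'_lim).comp hw hw_maps).mul
        (hslice hg').continuousOn).mul hginv).mul (hslice hh).continuousOn)
  obtain ⟨bound, hbound, hΦb⟩ := exists_integrable_bound_of_continuousOn (μ := μ)
    (isCompact_Icc.prod (isCompact_closedBall 0 δ)) hK hΦ fun p _ x hx => by
      simp [hg'K _ x hx, hh'K _ x hx]
  exact ⟨bound, hbound, fun t ht x => hΦb (v x, t) ⟨⟨hv_nonneg x, hM x⟩, ht⟩ x⟩

theorem hasDerivAt_integral_comp_mul_inv_mul {η η' : ℝ → ℝ} (hη_cont : ContinuousOn η (Ici 0))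
    (hη0 : η 0 = 0) (hη_deriv : ∀ r, 0 < r → HasDerivAt η (η' r) r)
    (hη'_cont : ContinuousOn η' (Ioi 0)) (hη'_lim : Tendsto (fun r => r * η' r) (𝓝[>] 0) (𝓝 0))
    {g g' h h' : ℝ × E → ℝ} (hg : Continuous g) (hg' : Continuous g') (hh : Continuous h)
    (hh' : Continuous h') (hg_deriv : ∀ t x, HasDerivAt (fun s => g (s, x)) (g' (t, x)) t)
    (hh_deriv : ∀ t x, HasDerivAt (fun s => h (s, x)) (h' (t, x)) t)
    (hg₀ : ∀ x, g (0, x) = 1) (hh₀ : ∀ x, h (0, x) = 1) {K : Set E} (hK : IsCompact K)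
    (hgK : ∀ t, ∀ x ∉ K, g (t, x) = 1) (hhK : ∀ t, ∀ x ∉ K, h (t, x) = 1) {δ : ℝ} (hδ : 0 < δ)
    (hg_pos : ∀ t ∈ Metric.closedBall (0 : ℝ) δ, ∀ x, 0 < g (t, x)) {v : E → ℝ}
    (hv : Measurable v) (hv_nonneg : ∀ x, 0 ≤ v x) (hv_bdd : ∃ M, ∀ x, v x ≤ M)
    (hηv : Integrable (fun x => η (v x)) μ) :
    HasDerivAt (fun t => ∫ x, η (v x * (g (t, x))⁻¹) * h (t, x) ∂μ)
      (∫ x, (η (v x) * h' (0, x) - η' (v x) * v x * g' (0, x)) ∂μ) 0 := by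
  have hderiv_off : ∀ {f f' : ℝ × E → ℝ}, (∀ t x, HasDerivAt (fun s => f (s, x)) (f' (t, x)) t) →
      (∀ t, ∀ x ∉ K, f (t, x) = 1) → ∀ t, ∀ x ∉ K, f' (t, x) = 0 := fun hf hfK t x hx =>
    (hf t x).unique (by simpa only [hfK _ x hx] using hasDerivAt_const t (1 : ℝ))
  have hF_int : ∀ t ∈ Metric.closedBall (0 : ℝ) δ,
      Integrable (fun x => η (v x * (g (t, x))⁻¹) * h (t, x)) μ := fun t ht =>
    integrable_comp_mul_inv_mul hη_cont (hg.comp (Continuous.prodMk_right t))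
      (hh.comp (Continuous.prodMk_right t)) (hg_pos t ht) hK (hgK t) (hhK t) hv hv_nonneg hv_bdd
      hηv
  obtain ⟨bound, hbound, hbound_le⟩ := exists_integrable_bound_deriv_comp_mul_inv_mul (μ := μ)
    hη_cont hη'_cont hη'_lim hg hg' hh hh' hK (hderiv_off hg_deriv hgK) (hderiv_off hh_deriv hhK)
    hg_pos hv_nonneg hv_bdd
  have hslice₀ : ∀ {f : ℝ × E → ℝ}, Continuous f → Measurable fun x => f (0, x) :=
    fun hf => (hf.comp (Continuous.prodMk_right 0)).measurable
  have hF'_meas : AEStronglyMeasurable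
      (fun x => η (v x) * h' (0, x) - v x * η' (v x) * g' (0, x)) μ :=
    (hηv.1.mul (hslice₀ hh').aestronglyMeasurable).sub ((measurable_comp_of_continuousOn_Ici
      (continuousOn_mul_Ici_of_tendsto hη'_cont hη'_lim) hv hv_nonneg).mul
        (hslice₀ hg')).aestronglyMeasurable
  have key := hasDerivAt_integral_of_dominated_loc_of_deriv_le (μ := μ) (x₀ := 0)
    (F := fun t x => η (v x * (g (t, x))⁻¹) * h (t, x))
    (F' := fun t x => η (v x * (g (t, x))⁻¹) * h' (t, x) - v x * (g (t, x))⁻¹ *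
      η' (v x * (g (t, x))⁻¹) * g' (t, x) * (g (t, x))⁻¹ * h (t, x))
    (Metric.ball_mem_nhds 0 hδ)
    (eventually_of_mem (Metric.ball_mem_nhds 0 hδ) fun t ht =>
      (hF_int t (Metric.ball_subset_closedBall ht)).aestronglyMeasurable)
    (hF_int 0 (Metric.mem_closedBall_self hδ.le)) (by simpa [hg₀, hh₀] using hF'_meas)
    (ae_of_all _ fun x t ht => hbound_le t (Metric.ball_subset_closedBall ht) x) hbound
    (ae_of_all _ fun x t ht => hasDerivAt_comp_mul_inv_mul hη0 hη_deriv (hg_deriv t x)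
      (hh_deriv t x) (hg_pos t (Metric.ball_subset_closedBall ht) x) (hv_nonneg x))
  refine key.2.congr_deriv (integral_congr_ae (ae_of_all _ fun x => ?_))
  simp only [hg₀, hh₀, inv_one, mul_one]
  ring

end Integral

section Jacobian

variable {d : ℕ} {φ : EuclideanSpace ℝ (Fin d) → EuclideanSpace ℝ (Fin d)}

theorem contDiff_jacobianMatrix_apply {k : WithTop ℕ∞} (hφ : ContDiff ℝ (k + 1) φ) (i j : Fin d) :
    ContDiff ℝ k fun x => jacobianMatrix φ x i j :=
  (((EuclideanSpace.proj i).comp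
    (ContinuousLinearMap.apply ℝ _ (EuclideanSpace.single j 1))).contDiff.comp
      (hφ.fderiv_right le_rfl) :)

theorem jacobianMatrix_eq_zero_of_notMem_tsupport {x : EuclideanSpace ℝ (Fin d)}
    (hx : x ∉ tsupport φ) : jacobianMatrix φ x = 0 := by
  ext i j
  simp [jacobianMatrix, fderiv_of_notMem_tsupport ℝ hx]

theorem contDiff_det_one_add_smul_jacobianMatrix {X : Type*} [NormedAddCommGroup X]
    [NormedSpace ℝ X] {k : WithTop ℕ∞} {a : X → ℝ} {w : X → EuclideanSpace ℝ (Fin d)}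
    (ha : ContDiff ℝ k a) (hw : ContDiff ℝ k w) (hφ : ContDiff ℝ (k + 1) φ) :
    ContDiff ℝ k fun q => (1 + a q • jacobianMatrix φ (w q)).det := by
  refine contDiff_det fun i j => ?_
  simp only [Matrix.add_apply, Matrix.smul_apply, smul_eq_mul]
  exact contDiff_const.add (ha.mul ((contDiff_jacobianMatrix_apply hφ i j).comp hw))

theorem hasDerivAt_det_one_add_smul_jacobianMatrix (hφ : ContDiff ℝ 2 φ)
    {w : ℝ → EuclideanSpace ℝ (Fin d)} (hw : DifferentiableAt ℝ w 0) :
    HasDerivAt (fun t => (1 + t • jacobianMatrix φ (w t)).det) (jacobianMatrix φ (w 0)).trace 0 :=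
  hasDerivAt_det_one_add_smul_apply fun i j =>
    ((contDiff_jacobianMatrix_apply (k := 1) hφ i j).differentiable one_ne_zero _).comp 0 hw

theorem fderiv_det_one_add_smul_jacobianMatrix_apply (hφ : ContDiff ℝ 2 φ)
    {w : ℝ × EuclideanSpace ℝ (Fin d) → EuclideanSpace ℝ (Fin d)} (hw : ContDiff ℝ 1 w)
    (hw₀ : ∀ x, w (0, x) = x) (x : EuclideanSpace ℝ (Fin d)) :
    fderiv ℝ (fun q => (1 + q.1 • jacobianMatrix φ (w q)).det) (0, x) (1, 0) =
      (jacobianMatrix φ x).trace := by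
  have hdet := contDiff_det_one_add_smul_jacobianMatrix contDiff_fst hw hφ
  refine (hasDerivAt_comp_prodMk_fderiv (hdet.differentiable one_ne_zero _)).unique ?_
  simpa [hw₀] using hasDerivAt_det_one_add_smul_jacobianMatrix hφ
    ((hw.differentiable one_ne_zero _).comp (0 : ℝ) (differentiableAt_id.prodMk
      (differentiableAt_const x)))

theorem eventually_forall_det_one_add_smul_jacobianMatrix_pos (hφ : ContDiff ℝ 1 φ)
    (hφc : HasCompactSupport φ) :
    ∀ᶠ t in 𝓝 (0 : ℝ), ∀ y, 0 < (1 + t • jacobianMatrix φ y).det := by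
  have hc : Continuous fun q : ℝ × EuclideanSpace ℝ (Fin d) =>
      (1 + q.1 • jacobianMatrix φ q.2).det :=
    (contDiff_det_one_add_smul_jacobianMatrix (k := 0) contDiff_fst contDiff_snd
      (by simpa using hφ)).continuous
  exact eventually_forall_mem_of_eq_off_compact hc (fun y => by simp) hφc
    (fun t y hy => by simp [jacobianMatrix_eq_zero_of_notMem_tsupport hy]) (Ioi_mem_nhds one_pos)

end Jacobian

/-- Let `η : [0,∞) → ℝ` be continuous with `η(0) = 0`, continuously
differentiable on `(0,∞)` (with derivative `η'`), and `r·η'(r) → 0` as `r → 0⁺`. Let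
`φ : ℝ^d → ℝ^d` be `C²` with compact support, and `v : ℝ^d → [0,∞)` measurable and bounded
with `η∘v` Lebesgue integrable. Then there is `ε > 0` such that
`τ ↦ ∫ η(v(x)·(det(I + τ·Dφ(x + τφ(x))))⁻¹)·det(I + τ·Dφ(x)) dx` is well defined on
`(−ε,ε)` and differentiable at `τ = 0` with derivative
`∫ (η(v(x)) − η'(v(x))·v(x))·div φ(x) dx` (the term `η'(v(x))·v(x)` vanishes on `{v = 0}`
since it carries the factor `v(x) = 0`). -/
theorem stmt_13 (d : ℕ) (η η' : ℝ → ℝ)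
    (hη_cont : ContinuousOn η (Ici 0)) (hη0 : η 0 = 0)
    (hη_deriv : ∀ r : ℝ, 0 < r → HasDerivAt η (η' r) r)
    (hη'_cont : ContinuousOn η' (Ioi 0))
    (hη'_lim : Filter.Tendsto (fun r => r * η' r) (nhdsWithin 0 (Ioi 0)) (nhds 0))
    (φ : EuclideanSpace ℝ (Fin d) → EuclideanSpace ℝ (Fin d))
    (hφ : ContDiff ℝ 2 φ) (hφc : HasCompactSupport φ)
    (v : EuclideanSpace ℝ (Fin d) → ℝ)
    (hv_meas : Measurable v) (hv_nonneg : ∀ x, 0 ≤ v x)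
    (hv_bdd : ∃ M : ℝ, ∀ x, v x ≤ M)
    (hηv_int : Integrable (fun x => η (v x)) volume) :
    ∃ ε > (0 : ℝ),
      (∀ τ ∈ Ioo (-ε) ε, ∀ x,
        0 < (1 + τ • jacobianMatrix φ (x + τ • φ x)).det ∧
        0 < (1 + τ • jacobianMatrix φ x).det) ∧
      (∀ τ ∈ Ioo (-ε) ε,
        Integrable (fun x =>
          η (v x * ((1 + τ • jacobianMatrix φ (x + τ • φ x)).det)⁻¹) *
            (1 + τ • jacobianMatrix φ x).det) volume) ∧
      HasDerivAt
        (fun τ : ℝ => ∫ x,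
          η (v x * ((1 + τ • jacobianMatrix φ (x + τ • φ x)).det)⁻¹) *
            (1 + τ • jacobianMatrix φ x).det)
        (∫ x, (η (v x) - η' (v x) * v x) * (jacobianMatrix φ x).trace) 0 := by
  set G : ℝ × EuclideanSpace ℝ (Fin d) → ℝ :=
    fun q => (1 + q.1 • jacobianMatrix φ (q.2 + q.1 • φ q.2)).det
  set H : ℝ × EuclideanSpace ℝ (Fin d) → ℝ := fun q => (1 + q.1 • jacobianMatrix φ q.2).det
  have hw : ContDiff ℝ 1 fun q : ℝ × EuclideanSpace ℝ (Fin d) => q.2 + q.1 • φ q.2 :=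
    contDiff_snd.add (contDiff_fst.smul ((hφ.of_le one_le_two).comp contDiff_snd))
  have hG : ContDiff ℝ 1 G := contDiff_det_one_add_smul_jacobianMatrix contDiff_fst hw hφ
  have hH : ContDiff ℝ 1 H := contDiff_det_one_add_smul_jacobianMatrix contDiff_fst contDiff_snd hφ
  have hHK : ∀ t, ∀ x ∉ tsupport φ, H (t, x) = 1 := fun t x hx => by
    simp [H, jacobianMatrix_eq_zero_of_notMem_tsupport hx]
  have hGK : ∀ t, ∀ x ∉ tsupport φ, G (t, x) = 1 := fun t x hx => by
    simpa [G, image_eq_zero_of_notMem_tsupport hx] using hHK t x hx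
  obtain ⟨ε, hε, hHpos⟩ := Metric.nhds_basis_closedBall.eventually_iff.1
    (eventually_forall_det_one_add_smul_jacobianMatrix_pos (hφ.of_le one_le_two) hφc)
  have hGpos : ∀ t ∈ Metric.closedBall (0 : ℝ) ε, ∀ x, 0 < G (t, x) := fun t ht x => hHpos ht _
  have hIoo : Ioo (-ε) ε ⊆ Metric.closedBall 0 ε := by
    simpa [Real.closedBall_eq_Icc] using Ioo_subset_Icc_self
  refine ⟨ε, hε, fun τ hτ x => ⟨hGpos τ (hIoo hτ) x, hHpos (hIoo hτ) x⟩, fun τ hτ =>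
    integrable_comp_mul_inv_mul hη_cont (hG.continuous.comp (Continuous.prodMk_right τ))
      (hH.continuous.comp (Continuous.prodMk_right τ)) (hGpos τ (hIoo hτ)) hφc (hGK τ) (hHK τ)
      hv_meas hv_nonneg hv_bdd hηv_int, ?_⟩
  refine (hasDerivAt_integral_comp_mul_inv_mul hη_cont hη0 hη_deriv hη'_cont hη'_lim
    hG.continuous ((hG.continuous_fderiv one_ne_zero).clm_apply continuous_const) hH.continuous
    ((hH.continuous_fderiv one_ne_zero).clm_apply continuous_const)
    (fun _ _ => hasDerivAt_comp_prodMk_fderiv (hG.differentiable one_ne_zero _))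
    (fun _ _ => hasDerivAt_comp_prodMk_fderiv (hH.differentiable one_ne_zero _))
    (fun x => by simp [G]) (fun x => by simp [H]) hφc hGK hHK hε hGpos hv_meas hv_nonneg hv_bdd
    hηv_int).congr_deriv (integral_congr_ae (ae_of_all _ fun x => ?_))
  dsimp only [G, H]
  rw [fderiv_det_one_add_smul_jacobianMatrix_apply hφ hw (by simp),
    fderiv_det_one_add_smul_jacobianMatrix_apply hφ contDiff_snd (fun _ => rfl)]
  ring
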